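/- Let λ₁, λ₂ > 0, μ ≥ 0, K > 0 and consider the spatially homogeneous go-or-grow ODE system p' = μ p(1 − (p+m)/K) − λ₁ p + λ₂ m, m' = λ₁ p − λ₂ m with p(0), m(0) ≥ 0 and p(0) + m(0) ≤ K. Then p(t) ≥ 0, m(t) ≥ 0, and p(t) + m(t) ≤ K for all t ≥ 0. -/

import Mathlib

open Set Filter Topology Real intervalIntegral

/-- Positivity is preserved for a cooperative linear 2-system. -/
lemma coop_nonneg (w z α β : ℝ → ℝ) (T : ℝ)
    (hw : ∀ t ∈ Set.Icc (0:ℝ) T, HasDerivAt w (α t * z t) t)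
    (hz : ∀ t ∈ Set.Icc (0:ℝ) T, HasDerivAt z (β t * w t) t)
    (hαc : ContinuousOn α (Set.Icc 0 T)) (hβc : ContinuousOn β (Set.Icc 0 T))
    (hα0 : ∀ t ∈ Set.Icc (0:ℝ) T, 0 ≤ α t) (hβ0 : ∀ t ∈ Set.Icc (0:ℝ) T, 0 ≤ β t)
    (hw0 : 0 ≤ w 0) (hz0 : 0 ≤ z 0) :
    ∀ t ∈ Set.Icc (0:ℝ) T, 0 ≤ w t ∧ 0 ≤ z t := by
  intro t ht
  have hT : (0:ℝ) ≤ T := ht.1.trans ht.2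
  -- bound for the coefficients
  obtain ⟨Ca, hCa⟩ := IsCompact.exists_bound_of_continuousOn isCompact_Icc hαc
  obtain ⟨Cb, hCb⟩ := IsCompact.exists_bound_of_continuousOn isCompact_Icc hβc
  set C : ℝ := max (max Ca Cb) 0 with hCdef
  have hC0 : (0:ℝ) ≤ C := le_max_right _ _
  have hαC : ∀ s ∈ Set.Icc (0:ℝ) T, α s ≤ C := fun s hs =>
    ((le_abs_self _).trans ((Real.norm_eq_abs _ ▸ hCa s hs : |α s| ≤ Ca))).trans
      ((le_max_left Ca Cb).trans (le_max_left _ 0))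
  have hβC : ∀ s ∈ Set.Icc (0:ℝ) T, β s ≤ C := fun s hs =>
    ((le_abs_self _).trans ((Real.norm_eq_abs _ ▸ hCb s hs : |β s| ≤ Cb))).trans
      ((le_max_right Ca Cb).trans (le_max_left _ 0))
  set F : ℝ → ℝ := fun s => max (max (-w s) (-z s)) 0 with hFdef
  have hwc : ContinuousOn w (Set.Icc 0 T) := fun s hs => (hw s hs).continuousAt.continuousWithinAt
  have hzc : ContinuousOn z (Set.Icc 0 T) := fun s hs => (hz s hs).continuousAt.continuousWithinAt
  have hFc : ContinuousOn F (Set.Icc 0 T) := fun s hs =>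
    (((hwc s hs).neg.max ((hzc s hs).neg)).max continuousWithinAt_const)
  have key : ∀ x ∈ Set.Ico (0:ℝ) T, ∀ r, (fun x => C * F x) x < r →
      ∃ᶠ zz in 𝓝[>] x, (zz - x)⁻¹ * (F zz - F x) < r := by
    intro x hx r hr
    simp only at hr
    have hx' : x ∈ Set.Icc (0:ℝ) T := Set.Ico_subset_Icc_self hx
    have hFx0 : 0 ≤ F x := le_max_right _ _
    have hr0 : 0 < r := lt_of_le_of_lt (mul_nonneg hC0 hFx0) hr
    have main : ∀ u v γ : ℝ → ℝ, HasDerivAt u (γ x * v x) x → 0 ≤ γ x → γ x ≤ C →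
        -v x ≤ F x → -u x ≤ F x → ∀ᶠ zz in 𝓝[>] x, -u zz < F x + r * (zz - x) := by
      intro u v γ hder hγ0 hγC hv hu
      rcases eq_or_lt_of_le hu with heq | hlt
      · -- active component: use the derivative bound
        have hd : -(γ x * v x) < r := by
          calc -(γ x * v x) = γ x * (-v x) := by ring
            _ ≤ γ x * F x := mul_le_mul_of_nonneg_left hv hγ0
            _ ≤ C * F x := mul_le_mul_of_nonneg_right hγC hFx0
            _ < r := hr
        have hslope : Tendsto (slope (fun s => -u s) x) (𝓝[≠] x) (𝓝 (-(γ x * v x))) :=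
          hasDerivAt_iff_tendsto_slope.mp hder.neg
        have hev : ∀ᶠ zz in 𝓝[≠] x, slope (fun s => -u s) x zz < r :=
          hslope.eventually_lt_const hd
        have hev' : ∀ᶠ zz in 𝓝[>] x, slope (fun s => -u s) x zz < r :=
          hev.filter_mono (nhdsWithin_mono x fun y hy => hy.ne')
        filter_upwards [hev', self_mem_nhdsWithin] with zz hzz hzx
        have hpos : 0 < zz - x := sub_pos.mpr hzx
        rw [slope_def_field] at hzz
        have h2 := (div_lt_iff₀ hpos).mp hzz
        have : -u x = F x := heq
        linarith
      · -- inactive component: continuity suffices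
        have hcont : Tendsto (fun s => -u s) (𝓝 x) (𝓝 (-u x)) := hder.continuousAt.neg.tendsto
        have hev : ∀ᶠ zz in 𝓝 x, -u zz < F x := hcont.eventually_lt_const hlt
        filter_upwards [hev.filter_mono nhdsWithin_le_nhds, self_mem_nhdsWithin] with zz h1 h2
        have : 0 < r * (zz - x) := mul_pos hr0 (sub_pos.mpr h2)
        linarith
    have hwF : -w x ≤ F x := (le_max_left _ _).trans (le_max_left _ 0)
    have hzF : -z x ≤ F x := (le_max_right _ _).trans (le_max_left _ 0)
    have h1 := main w z α (hw x hx') (hα0 x hx') (hαC x hx') hzF hwF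
    have h2 := main z w β (hz x hx') (hβ0 x hx') (hβC x hx') hwF hzF
    apply Filter.Eventually.frequently
    filter_upwards [h1, h2, self_mem_nhdsWithin] with zz hw' hz' hzx
    have hpos : 0 < zz - x := sub_pos.mpr hzx
    have hFzz : F zz < F x + r * (zz - x) := by
      apply max_lt (max_lt hw' hz')
      have : 0 < r * (zz - x) := mul_pos hr0 hpos
      linarith
    have hdiv : (F zz - F x) / (zz - x) < r := (div_lt_iff₀ hpos).mpr (by linarith)
    rwa [div_eq_inv_mul] at hdiv
  have hF0 : F 0 ≤ 0 := max_le (max_le (by linarith) (by linarith)) le_rfl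
  have hb := le_gronwallBound_of_liminf_deriv_right_le (f' := fun x => C * F x)
    hFc key hF0 (fun x hx => by rw [add_zero])
  have hFt : F t ≤ 0 := by
    have := hb t ht
    rwa [gronwallBound_ε0_δ0] at this
  constructor
  · have : -w t ≤ F t := (le_max_left _ _).trans (le_max_left _ 0)
    linarith
  · have : -z t ≤ F t := (le_max_right _ _).trans (le_max_left _ 0)
    linarith

theorem invariant_region
    (lam1 lam2 mu K : ℝ) (h1 : 0 < lam1) (h2 : 0 < lam2) (hmu : 0 ≤ mu) (hK : 0 < K)
    (p m : ℝ → ℝ)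
    (hp : ∀ t, 0 ≤ t → HasDerivAt p (mu * p t * (1 - (p t + m t) / K) - lam1 * p t + lam2 * m t) t)
    (hm : ∀ t, 0 ≤ t → HasDerivAt m (lam1 * p t - lam2 * m t) t)
    (hp0 : 0 ≤ p 0) (hm0 : 0 ≤ m 0) (hn0 : p 0 + m 0 ≤ K) :
    ∀ t, 0 ≤ t → 0 ≤ p t ∧ 0 ≤ m t ∧ p t + m t ≤ K := by
  -- continuity of clamped p and m
  have hPc : Continuous fun s : ℝ => p (max s 0) := by
    rw [continuous_iff_continuousAt]
    intro s
    have h1 : ContinuousAt (fun b : ℝ => max b 0) s :=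
      (continuous_id.max continuous_const).continuousAt
    exact show ContinuousAt (p ∘ fun b : ℝ => max b 0) s from
      ContinuousAt.comp (f := fun b : ℝ => max b 0) (x := s)
        ((hp _ (le_max_right s 0)).continuousAt) h1
  have hMc : Continuous fun s : ℝ => m (max s 0) := by
    rw [continuous_iff_continuousAt]
    intro s
    have h1 : ContinuousAt (fun b : ℝ => max b 0) s :=
      (continuous_id.max continuous_const).continuousAt
    exact show ContinuousAt (m ∘ fun b : ℝ => max b 0) s from
      ContinuousAt.comp (f := fun b : ℝ => max b 0) (x := s)
        ((hm _ (le_max_right s 0)).continuousAt) h1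
  -- Step 1: p + m ≤ K, via the exact linear ODE for K - (p+m)
  have step1 : ∀ t, 0 ≤ t → p t + m t ≤ K := by
    have hac : Continuous fun s : ℝ => -(mu * p (max s 0)) / K :=
      ((continuous_const.mul hPc).neg).div_const K
    set a : ℝ → ℝ := fun s => -(mu * p (max s 0)) / K with hadef
    set A : ℝ → ℝ := fun s => ∫ x in (0:ℝ)..s, a x with hAdef
    have hA : ∀ s : ℝ, HasDerivAt A (a s) s := fun s =>
      (hac.integral_hasStrictDerivAt 0 s).hasDerivAt
    set u : ℝ → ℝ := fun s => (K - (p s + m s)) * Real.exp (-A s) with hudef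
    have hu : ∀ s, 0 ≤ s → HasDerivAt u 0 s := by
      intro s hs
      have hn : HasDerivAt (fun x => K - (p x + m x))
          (-((mu * p s * (1 - (p s + m s) / K) - lam1 * p s + lam2 * m s)
            + (lam1 * p s - lam2 * m s))) s :=
        (((hp s hs).add (hm s hs)).const_sub K)
      have he : HasDerivAt (fun x => Real.exp (-A x)) (Real.exp (-A s) * -a s) s :=
        (hA s).neg.exp
      have := hn.mul he
      refine this.congr_deriv (Eq.symm ?_)
      have hmax : max s 0 = s := max_eq_left hs
      simp only [hadef, hmax]
      field_simp
      ring
    have huconst : ∀ s, 0 ≤ s → u s = u 0 := by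
      intro s hs
      have hucont : ContinuousOn u (Set.Icc 0 s) := fun x hx =>
        ((hu x hx.1).continuousAt).continuousWithinAt
      exact constant_of_has_deriv_right_zero hucont
        (fun x hx => (hu x hx.1).hasDerivWithinAt) s (Set.right_mem_Icc.mpr hs)
    intro t ht
    have h0 : u 0 = K - (p 0 + m 0) := by
      simp [hudef, hAdef, intervalIntegral.integral_same]
    have hut : 0 ≤ u t := by
      rw [huconst t ht, h0]; linarith
    have h' : 0 ≤ (K - (p t + m t)) * Real.exp (-A t) := hut
    nlinarith [Real.exp_pos (-A t), h']
  -- Step 2: nonnegativity of p and m via a cooperative linear system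
  have hGc : Continuous fun s : ℝ => mu * (1 - (p (max s 0) + m (max s 0)) / K) - lam1 :=
    ((continuous_const.mul (continuous_const.sub ((hPc.add hMc).div_const K))).sub
      continuous_const)
  set g : ℝ → ℝ := fun s => mu * (1 - (p (max s 0) + m (max s 0)) / K) - lam1 with hgdef
  set G : ℝ → ℝ := fun s => ∫ x in (0:ℝ)..s, g x with hGdef
  have hG : ∀ s : ℝ, HasDerivAt G (g s) s := fun s =>
    (hGc.integral_hasStrictDerivAt 0 s).hasDerivAt
  have hGcont : Continuous G := by
    rw [continuous_iff_continuousAt]; exact fun s => (hG s).continuousAt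
  set w : ℝ → ℝ := fun s => p s * Real.exp (-G s) with hwdef
  set z : ℝ → ℝ := fun s => m s * Real.exp (lam2 * s) with hzdef
  set α : ℝ → ℝ := fun s => lam2 * Real.exp (-G s - lam2 * s) with hαdef
  set β : ℝ → ℝ := fun s => lam1 * Real.exp (lam2 * s + G s) with hβdef
  intro t ht
  have hw : ∀ s ∈ Set.Icc (0:ℝ) t, HasDerivAt w (α s * z s) s := by
    intro s hs
    have hs0 := hs.1
    have hder := (hp s hs0).mul ((hG s).neg.exp)
    refine hder.congr_deriv (Eq.symm ?_)
    have hmax : max s 0 = s := max_eq_left hs0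
    have hexp : Real.exp (-G s - lam2 * s) * Real.exp (lam2 * s) = Real.exp (-G s) := by
      rw [← Real.exp_add]; ring_nf
    simp only [hαdef, hzdef, hgdef, hmax, Pi.neg_apply]
    rw [← hexp]
    ring
  have hz : ∀ s ∈ Set.Icc (0:ℝ) t, HasDerivAt z (β s * w s) s := by
    intro s hs
    have hs0 := hs.1
    have hder := (hm s hs0).mul (((hasDerivAt_id s).const_mul lam2).exp)
    refine hder.congr_deriv (Eq.symm ?_)
    have hexp : Real.exp (lam2 * s + G s) * Real.exp (-G s) = Real.exp (lam2 * s) := by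
      rw [← Real.exp_add]; ring_nf
    simp only [hβdef, hwdef, id_eq]
    rw [← hexp]
    ring
  have hαc : ContinuousOn α (Set.Icc 0 t) :=
    (continuous_const.mul ((hGcont.neg.sub (continuous_const.mul continuous_id)).rexp)).continuousOn
  have hβc : ContinuousOn β (Set.Icc 0 t) :=
    (continuous_const.mul (((continuous_const.mul continuous_id).add hGcont).rexp)).continuousOn
  have hα0 : ∀ s ∈ Set.Icc (0:ℝ) t, 0 ≤ α s := fun s _ =>
    mul_nonneg h2.le (Real.exp_pos _).le
  have hβ0 : ∀ s ∈ Set.Icc (0:ℝ) t, 0 ≤ β s := fun s _ =>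
    mul_nonneg h1.le (Real.exp_pos _).le
  have hw0 : 0 ≤ w 0 := mul_nonneg hp0 (Real.exp_pos _).le
  have hz0 : 0 ≤ z 0 := mul_nonneg hm0 (Real.exp_pos _).le
  obtain ⟨hwt, hzt⟩ :=
    coop_nonneg w z α β t hw hz hαc hβc hα0 hβ0 hw0 hz0 t (Set.right_mem_Icc.mpr ht)
  refine ⟨?_, ?_, step1 t ht⟩
  · have h' : 0 ≤ p t * Real.exp (-G t) := hwt
    nlinarith [Real.exp_pos (-G t)]
  · have h' : 0 ≤ m t * Real.exp (lam2 * t) := hzt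
    nlinarith [Real.exp_pos (lam2 * t)]
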